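/- arXiv:1511.06456 — 4 statements merged into one kernel-verified Lean document; each statement's English description precedes it below -/
import Mathlib

section
/- Theorem 1 (min-min bound): Let N ≥ 1 and, for i = 1, …, N, let lᵢ, aᵢ, bᵢ be real numbers, where lᵢ = L(xᵢ, ŷᵢ) is the task loss of the i-th prediction, aᵢ = F(xᵢ, yᵢ) is the score of the i-th ground truth, and bᵢ = F(xᵢ, ŷᵢ) is the score of the i-th prediction. Then the empirical risk R̂ = (1/N) Σᵢ lᵢ satisfies R̂ ≤ (1/N) Σᵢ (|aᵢ| + |lᵢ − bᵢ|) + (1/N) Σᵢ max(bᵢ − aᵢ, 0); that is, R̂(α) ≤ R_min,min(α) + M(α). -/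
/-- Theorem 1 (min-min bound): the empirical risk is bounded by the
min-min surrogate risk plus the approximate-minimization penalty `M`.
Here `l i = L(xᵢ, ŷᵢ)`, `a i = F(xᵢ, yᵢ)`, `b i = F(xᵢ, ŷᵢ)`. -/
theorem min_min_bound (N : ℕ) (hN : 1 ≤ N) (l a b : Fin N → ℝ) :
    (1 / N : ℝ) * ∑ i, l i ≤
      (1 / N : ℝ) * ∑ i, (|a i| + |l i - b i|) +
        (1 / N : ℝ) * ∑ i, max (b i - a i) 0 := by
  rw [← mul_add, ← Finset.sum_add_distrib]
  apply mul_le_mul_of_nonneg_left _ (by positivity)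
  apply Finset.sum_le_sum
  intro i _
  have h1 : l i ≤ b i + |l i - b i| := by
    have := le_abs_self (l i - b i); linarith
  have h2 : b i ≤ |a i| + max (b i - a i) 0 := by
    have := le_abs_self (a i)
    have := le_max_left (b i - a i) 0
    linarith
  linarith
end

section
/- Theorem 2, per-sequence form: Let C̄ be a nonempty finite alphabet, let ŷ = (ŷ¹, …, ŷⁿ) be a sequence over C̄, and let δ_α and δ_o be real-valued functions of a token c ∈ C̄ and a prefix ŷ^{1…j−1}. Suppose that for every j ∈ {1, …, n} the token ŷʲ minimizes c ↦ δ_α(c, ŷ^{1…j−1}) over C̄, and let c_minʲ be a minimizer of c ↦ δ_o(c, ŷ^{1…j−1}) over C̄. Then Σ_{j=1}^{n} δ_o(ŷʲ, ŷ^{1…j−1}) ≤ Σ_{j=1}^{n} ( |δ_α(ŷʲ, ŷ^{1…j−1}) − δ_o(ŷʲ, ŷ^{1…j−1})| + |δ_α(c_minʲ, ŷ^{1…j−1})| ). -/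
/-- Theorem 2, per-sequence form: if every token of the sequence `yhat` is
chosen greedily (minimizing the model score increment `δa` over the finite
alphabet `C`) and `cmin j` minimizes the optimistic increment `δo` at step
`j`, then the sum of optimistic increments along `yhat` (i.e., the task
loss of the greedy prediction) is bounded by the greedy surrogate loss. -/
theorem greedy_per_sequence_bound {C : Type*} [Fintype C] [Nonempty C]
    (δa δo : C → List C → ℝ) (yhat : List C)
    (hgreedy : ∀ j : Fin yhat.length, ∀ c : C,
      δa (yhat.get j) (yhat.take j) ≤ δa c (yhat.take j))
    (cmin : Fin yhat.length → C)
    (hcmin : ∀ j : Fin yhat.length, ∀ c : C,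
      δo (cmin j) (yhat.take j) ≤ δo c (yhat.take j)) :
    ∑ j : Fin yhat.length, δo (yhat.get j) (yhat.take j) ≤
      ∑ j : Fin yhat.length,
        (|δa (yhat.get j) (yhat.take j) - δo (yhat.get j) (yhat.take j)| +
          |δa (cmin j) (yhat.take j)|) := by
  refine Finset.sum_le_sum fun j _ => ?_
  have h1 := hgreedy j (cmin j)
  have h2 := le_abs_self (δa (yhat.get j) (yhat.take j) - δo (yhat.get j) (yhat.take j))
  have h3 := le_abs_self (δa (cmin j) (yhat.take j))
  have h4 := neg_abs_le (δa (yhat.get j) (yhat.take j) - δo (yhat.get j) (yhat.take j))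
  linarith
end

section
/- Theorem 2 (greedy consistency, averaged form): Let C̄ be a nonempty finite alphabet and N ≥ 1. For each example i = 1, …, N, let ŷᵢ be a sequence over C̄ of length nᵢ such that each token ŷᵢʲ minimizes c ↦ δ_α(c, xᵢ, ŷᵢ^{1…j−1}) over C̄ (greedy search), let c_min^{i,j} minimize c ↦ δ_o(c, xᵢ, ŷᵢ^{1…j−1}) over C̄, and suppose the task loss of the prediction equals the telescoping sum L(xᵢ, ŷᵢ) = Σ_{j=1}^{nᵢ} δ_o(ŷᵢʲ, xᵢ, ŷᵢ^{1…j−1}). Then the greedy empirical risk R̂_greedy = (1/N) Σᵢ L(xᵢ, ŷᵢ) satisfies R̂_greedy ≤ (1/N) Σᵢ Σ_{j=1}^{nᵢ} ( |δ_α(ŷᵢʲ, xᵢ, ŷᵢ^{1…j−1}) − δ_o(ŷᵢʲ, xᵢ, ŷᵢ^{1…j−1})| + |δ_α(c_min^{i,j}, xᵢ, ŷᵢ^{1…j−1})| ); that is, R̂_greedy(α) ≤ R^ED_greedy(α). -/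
/-- Theorem 2 (greedy consistency, averaged form): if for each example the
prediction `yhat i` is produced by greedy search on the model increments
`δa`, `cmin i j` minimizes the optimistic increment `δo` at step `j`, and
the task loss `L i` of the prediction equals the telescoping sum of the
optimistic increments, then the greedy empirical risk is bounded by the
greedy surrogate risk: `R̂_greedy(α) ≤ R^ED_greedy(α)`. -/
theorem greedy_consistency {C : Type*} [Fintype C] [Nonempty C] {X : Type*}
    (N : ℕ) (hN : 1 ≤ N) (δa δo : C → X → List C → ℝ)
    (x : Fin N → X) (yhat : Fin N → List C) (L : Fin N → ℝ)
    (hgreedy : ∀ i, ∀ j : Fin (yhat i).length, ∀ c : C,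
      δa ((yhat i).get j) (x i) ((yhat i).take j) ≤ δa c (x i) ((yhat i).take j))
    (cmin : ∀ i : Fin N, Fin (yhat i).length → C)
    (hcmin : ∀ i, ∀ j : Fin (yhat i).length, ∀ c : C,
      δo (cmin i j) (x i) ((yhat i).take j) ≤ δo c (x i) ((yhat i).take j))
    (hL : ∀ i, L i = ∑ j : Fin (yhat i).length,
      δo ((yhat i).get j) (x i) ((yhat i).take j)) :
    (1 / N : ℝ) * ∑ i, L i ≤
      (1 / N : ℝ) * ∑ i, ∑ j : Fin (yhat i).length,
        (|δa ((yhat i).get j) (x i) ((yhat i).take j) -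
            δo ((yhat i).get j) (x i) ((yhat i).take j)| +
          |δa (cmin i j) (x i) ((yhat i).take j)|) := by
  apply mul_le_mul_of_nonneg_left _ (by positivity)
  apply Finset.sum_le_sum
  intro i _
  rw [hL i]
  apply Finset.sum_le_sum
  intro j _
  set a := δa ((yhat i).get j) (x i) ((yhat i).take j)
  set o := δo ((yhat i).get j) (x i) ((yhat i).take j)
  have h1 : a ≤ δa (cmin i j) (x i) ((yhat i).take j) := hgreedy i j _
  have h2 : δa (cmin i j) (x i) ((yhat i).take j) ≤
      |δa (cmin i j) (x i) ((yhat i).take j)| := le_abs_self _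
  have h3 : o - a ≤ |a - o| := by
    rw [abs_sub_comm]; exact le_abs_self _
  linarith
end

section
/- Monotonicity of the optimistic edit-distance loss (δ_o ≥ 0): Let C be a type with decidable equality, let t and y be lists over C, and let c ∈ C. Define f(y) = min over 0 ≤ k ≤ |t| of the Levenshtein distance (with unit insertion, deletion and substitution costs) between y and the prefix t.take k. Then f(y) ≤ f(y ++ [c]); that is, appending a character cannot decrease the optimistic task loss. -/
structure Levenshtein.Cost (α β δ : Type*) where
  delete : α → δ
  insert : β → δ
  substitute : α → β → δ

def Levenshtein.defaultCost {α : Type*} [DecidableEq α] : Levenshtein.Cost α α ℕ where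
  delete _ := 1
  insert _ := 1
  substitute a b := if a = b then 0 else 1

def Levenshtein.impl {α β δ : Type*} [AddZeroClass δ] [Min δ] (C : Levenshtein.Cost α β δ)
    (xs : List α) (y : β) (d : {r : List δ // 0 < r.length}) : {r : List δ // 0 < r.length} :=
  let ⟨ds, w⟩ := d
  xs.zip (ds.zip ds.tail) |>.foldr
    (init := ⟨[ds.getLast (List.length_pos_iff.mp w) + C.insert y], by simp⟩)
    (fun ⟨x, d₀, d₁⟩ ⟨r, w⟩ =>
      ⟨min (C.delete x + r[0]) (min (C.insert y + d₀) (C.substitute x y + d₁)) :: r, by simp⟩)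

def suffixLevenshtein {α β δ : Type*} [AddZeroClass δ] [Min δ] (C : Levenshtein.Cost α β δ)
    (xs : List α) (ys : List β) : {r : List δ // 0 < r.length} :=
  ys.foldr
    (Levenshtein.impl C xs)
    (xs.foldr (init := ⟨[0], by simp⟩) (fun a ⟨r, w⟩ => ⟨(C.delete a + r[0]) :: r, by simp⟩))

def levenshtein {α β δ : Type*} [AddZeroClass δ] [Min δ] (C : Levenshtein.Cost α β δ)
    (xs : List α) (ys : List β) : δ :=
  let ⟨r, _⟩ := suffixLevenshtein C xs ys
  r[0]

/-!
Restricting an optimal alignment of `xs ++ zs` with `ys` to `xs` aligns `xs` with a prefix of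
`ys` at no greater cost, since all edit costs are nonnegative; formally this is an induction
along the Levenshtein recurrence. Every term `ρ(y ++ [c], t.take k)` of the right-hand minimum
therefore dominates some `ρ(y, p)` with `p` a prefix of `t.take k`, hence of `t`, and such a
`ρ(y, p)` is a term of the left-hand minimum.
-/

section Recurrence

variable {α β δ : Type*} [AddZeroClass δ] [Min δ] (C : Levenshtein.Cost α β δ)

theorem Levenshtein.impl_length (xs : List α) (y : β) (d : {r : List δ // 0 < r.length})
    (w : d.1.length = xs.length + 1) :
    (Levenshtein.impl C xs y d).1.length = xs.length + 1 := by
  induction xs generalizing d with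
  | nil => rfl
  | cons x xs ih =>
    match d, w with
    | ⟨_ :: d₂ :: ds, _⟩, w =>
      exact congrArg (· + 1) (ih ⟨d₂ :: ds, by simp⟩ (by simpa using w))

theorem suffixLevenshtein_length (xs : List α) (ys : List β) :
    (suffixLevenshtein C xs ys).1.length = xs.length + 1 := by
  induction ys with
  | nil => induction xs with
    | nil => rfl
    | cons _ xs ih => simpa [suffixLevenshtein] using ih
  | cons y ys ih => exact Levenshtein.impl_length C xs y _ ih

theorem Levenshtein.impl_cons (x : α) (xs : List α) (y : β) (d : δ) (ds : List δ)
    (w : 0 < (d :: ds).length) (w' : 0 < ds.length) :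
    Levenshtein.impl C (x :: xs) y ⟨d :: ds, w⟩ =
      let ⟨r, w⟩ := Levenshtein.impl C xs y ⟨ds, w'⟩
      ⟨min (C.delete x + r[0]) (min (C.insert y + d) (C.substitute x y + ds[0])) :: r, by simp⟩ :=
  match ds, w' with | _ :: _, _ => rfl

theorem suffixLevenshtein_cons₁ (x : α) (xs : List α) (ys : List β) :
    suffixLevenshtein C (x :: xs) ys =
      ⟨levenshtein C (x :: xs) ys :: (suffixLevenshtein C xs ys).1, by simp⟩ := by
  induction ys with
  | nil => rfl
  | cons y ys ih =>
    have ext_of_head_of_tail : ∀ {u v : {r : List δ // 0 < r.length}},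
        u.1[0]'u.2 = v.1[0]'v.2 → u.1.tail = v.1.tail → u = v
      | ⟨_ :: _, _⟩, ⟨_ :: _, _⟩, h₀, h => by simp_all
    refine ext_of_head_of_tail rfl ?_
    change (Levenshtein.impl C (x :: xs) y (suffixLevenshtein C (x :: xs) ys)).1.tail = _
    rw [ih, Levenshtein.impl_cons (w' := by simp [suffixLevenshtein_length])]
    rfl

theorem levenshtein_cons_cons (x : α) (xs : List α) (y : β) (ys : List β) :
    levenshtein C (x :: xs) (y :: ys) =
      min (C.delete x + levenshtein C xs (y :: ys))
        (min (C.insert y + levenshtein C (x :: xs) ys)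
          (C.substitute x y + levenshtein C xs ys)) := by
  have key : suffixLevenshtein C (x :: xs) (y :: ys) =
      Levenshtein.impl C (x :: xs) y
        ⟨levenshtein C (x :: xs) ys :: (suffixLevenshtein C xs ys).1, by simp⟩ := by
    change Levenshtein.impl C (x :: xs) y (suffixLevenshtein C (x :: xs) ys) = _
    rw [suffixLevenshtein_cons₁]
  rw [Levenshtein.impl_cons (w' := by simp [suffixLevenshtein_length])] at key
  exact congrArg (fun s : {r : List δ // 0 < r.length} => s.1[0]'s.2) key

@[simp] theorem levenshtein_nil_nil : levenshtein C ([] : List α) ([] : List β) = 0 := rfl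

@[simp] theorem levenshtein_cons_nil (x : α) (xs : List α) :
    levenshtein C (x :: xs) ([] : List β) = C.delete x + levenshtein C xs [] := rfl

theorem suffixLevenshtein_nil (ys : List β) :
    suffixLevenshtein C ([] : List α) ys = ⟨[levenshtein C [] ys], by simp⟩ := by
  have hlen := suffixLevenshtein_length C ([] : List α) ys
  refine Subtype.ext
    (?_ : _ = [(suffixLevenshtein C ([] : List α) ys).1[0]'(suffixLevenshtein C [] ys).2])
  generalize suffixLevenshtein C ([] : List α) ys = s at hlen ⊢
  obtain ⟨_ | ⟨d, _ | _⟩, _⟩ := s <;> simp at hlen ⊢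

theorem levenshtein_nil_cons (y : β) (ys : List β) :
    levenshtein C ([] : List α) (y :: ys) = levenshtein C [] ys + C.insert y := by
  change (Levenshtein.impl C [] y (suffixLevenshtein C [] ys)).1[0]'_ = _
  rw [suffixLevenshtein_nil]
  rfl

end Recurrence

theorem exists_and_le_min {ι δ : Type*} [LinearOrder δ] {P : ι → Prop} {f : ι → δ} {a b : δ}
    (ha : ∃ i, P i ∧ f i ≤ a) (hb : ∃ i, P i ∧ f i ≤ b) : ∃ i, P i ∧ f i ≤ min a b := by
  rcases le_total a b with hab | hab
  · simpa only [min_eq_left hab] using ha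
  · simpa only [min_eq_right hab] using hb

section Bounds

variable {α β δ : Type*} [AddZeroClass δ] [LinearOrder δ] (C : Levenshtein.Cost α β δ)

theorem levenshtein_cons_left_le (x : α) (xs : List α) (ys : List β) :
    levenshtein C (x :: xs) ys ≤ C.delete x + levenshtein C xs ys := by
  cases ys with
  | nil => exact le_of_eq (levenshtein_cons_nil C x xs)
  | cons y ys => exact (levenshtein_cons_cons C x xs y ys).trans_le (min_le_left _ _)

theorem levenshtein_cons_cons_le (x : α) (xs : List α) (y : β) (ys : List β) :
    levenshtein C (x :: xs) (y :: ys) ≤ C.substitute x y + levenshtein C xs ys :=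
  (levenshtein_cons_cons C x xs y ys).trans_le ((min_le_right _ _).trans (min_le_right _ _))

end Bounds

section Prefix

variable {α β δ : Type*} [AddCommMonoid δ] [LinearOrder δ] (C : Levenshtein.Cost α β δ)

theorem levenshtein_cons_right_le (xs : List α) (y : β) (ys : List β) :
    levenshtein C xs (y :: ys) ≤ C.insert y + levenshtein C xs ys := by
  cases xs with
  | nil => exact le_of_eq ((levenshtein_nil_cons C y ys).trans (add_comm _ _))
  | cons x xs =>
    exact (levenshtein_cons_cons C x xs y ys).trans_le
      ((min_le_right _ _).trans (min_le_left _ _))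

variable [IsOrderedAddMonoid δ] [CanonicallyOrderedAdd δ]

theorem exists_prefix_levenshtein_le_append (xs zs : List α) (ys : List β) :
    ∃ p, p <+: ys ∧ levenshtein C xs p ≤ levenshtein C (xs ++ zs) ys := by
  induction xs generalizing ys with
  | nil => exact ⟨[], List.nil_prefix, by simp⟩
  | cons x xs ihx =>
    induction ys with
    | nil =>
      obtain ⟨p, hp, h⟩ := ihx []
      rw [List.prefix_nil.mp hp] at h
      exact ⟨[], List.nil_prefix, by simpa using add_le_add_right h (C.delete x)⟩
    | cons y ys ihy =>
      rw [List.cons_append] at ihy ⊢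
      rw [levenshtein_cons_cons]
      refine exists_and_le_min ?delete (exists_and_le_min ?insert ?substitute)
      case delete =>
        obtain ⟨p, hp, h⟩ := ihx (y :: ys)
        exact ⟨p, hp, (levenshtein_cons_left_le C x xs p).trans (add_le_add_right h _)⟩
      case insert =>
        obtain ⟨p, hp, h⟩ := ihy
        exact ⟨y :: p, List.cons_prefix_cons.mpr ⟨rfl, hp⟩,
          (levenshtein_cons_right_le C _ y p).trans (add_le_add_right h _)⟩
      case substitute =>
        obtain ⟨p, hp, h⟩ := ihx ys
        exact ⟨y :: p, List.cons_prefix_cons.mpr ⟨rfl, hp⟩,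
          (levenshtein_cons_cons_le C x xs y p).trans (add_le_add_right h _)⟩

end Prefix

/-- Monotonicity of the optimistic edit-distance loss (`δ_o ≥ 0`): with
`f y = min_{0 ≤ k ≤ |t|} ρ_levenshtein(y, t.take k)` (unit insertion,
deletion and substitution costs), appending a character cannot decrease
the optimistic task loss: `f y ≤ f (y ++ [c])`. -/
theorem optimistic_loss_monotone {C : Type*} [DecidableEq C]
    (t y : List C) (c : C) :
    (Finset.range (t.length + 1)).inf' Finset.nonempty_range_add_one
        (fun k => levenshtein Levenshtein.defaultCost y (t.take k)) ≤
      (Finset.range (t.length + 1)).inf' Finset.nonempty_range_add_one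
        (fun k => levenshtein Levenshtein.defaultCost (y ++ [c]) (t.take k)) := by
  refine Finset.le_inf' _ _ fun k _ => ?_
  obtain ⟨p, hp, hle⟩ :=
    exists_prefix_levenshtein_le_append Levenshtein.defaultCost y [c] (t.take k)
  have hpt : p <+: t := hp.trans (List.take_prefix k t)
  calc _ ≤ levenshtein Levenshtein.defaultCost y (t.take p.length) :=
        Finset.inf'_le _ (Finset.mem_range.mpr (Nat.lt_succ_of_le hpt.length_le))
    _ = levenshtein Levenshtein.defaultCost y p := by rw [← List.prefix_iff_eq_take.mp hpt]
    _ ≤ _ := hle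
end
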